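/- arXiv:2207.06931 — 5 statements merged into one kernel-verified Lean document; each statement's English description precedes it below -/
import Mathlib

section
/- If a bipartite channel N_{AB→A'B'} admits an extension channel M_{AB₁B₂→A'B₁'B₂'} satisfying permutation covariance M ∘ F_{B₁B₂} = F_{B₁'B₂'} ∘ M and the no-signaling marginal condition Tr_{B₂'} ∘ M = N ⊗ Tr_{B₂}, then N is non-signaling from Bob to Alice: Tr_{B'} ∘ N = Tr_{B'} ∘ N ∘ R^π_B, where R^π_B replaces the B input with the maximally mixed state. -/
open Matrix
open scoped ComplexOrder

noncomputable section

/-- Choi operator of a map between matrix algebras. -/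
def choiMap {A A' : Type*} [Fintype A] [DecidableEq A] [Fintype A']
    (f : Matrix A A ℂ → Matrix A' A' ℂ) : Matrix (A × A') (A × A') ℂ :=
  Matrix.of fun p q => f (Matrix.single p.1 q.1 1) p.2 q.2

/-- A map between matrix algebras is completely positive if it is linear and its
Choi operator is positive semi-definite. -/
def IsCPMap {A A' : Type*} [Fintype A] [DecidableEq A] [Fintype A']
    (f : Matrix A A ℂ → Matrix A' A' ℂ) : Prop :=
  IsLinearMap ℂ f ∧ (choiMap f).PosSemidef

/-- Trace preservation. -/
def IsTPMap {A A' : Type*} [Fintype A] [Fintype A']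
    (f : Matrix A A ℂ → Matrix A' A' ℂ) : Prop :=
  ∀ X, (f X).trace = X.trace

/-- A quantum channel: a completely positive trace-preserving map. -/
def IsChannel {A A' : Type*} [Fintype A] [DecidableEq A] [Fintype A']
    (f : Matrix A A ℂ → Matrix A' A' ℂ) : Prop :=
  IsCPMap f ∧ IsTPMap f

/-- The swap channel `F_{B₁B₂}` acting on the two `B` factors of `A × (B × B)`. -/
def swapB {A B : Type*} (X : Matrix (A × B × B) (A × B × B) ℂ) :
    Matrix (A × B × B) (A × B × B) ℂ :=
  Matrix.of fun p q => X (p.1, p.2.2, p.2.1) (q.1, q.2.2, q.2.1)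

/-- Partial trace over the last (`B₂`) factor. -/
def ptrLast {A B : Type*} [Fintype B] (X : Matrix (A × B × B) (A × B × B) ℂ) :
    Matrix (A × B) (A × B) ℂ :=
  Matrix.of fun p q => ∑ b : B, X (p.1, p.2, b) (q.1, q.2, b)

/-- Partial trace over the second (`B'`) factor of a bipartite output. -/
def ptrSnd {A B : Type*} [Fintype B] (X : Matrix (A × B) (A × B) ℂ) :
    Matrix A A ℂ :=
  Matrix.of fun a a' => ∑ b : B, X (a, b) (a', b)

/-- The replacer channel `R^π_B`: trace out the `B` input and replace it with the
maximally mixed state `π_B = I/d_B`. -/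
def replacerB {A B : Type*} [Fintype B] [DecidableEq B]
    (X : Matrix (A × B) (A × B) ℂ) : Matrix (A × B) (A × B) ℂ :=
  Matrix.of fun p q =>
    (if p.2 = q.2 then ((Fintype.card B : ℂ))⁻¹ else 0) * ∑ b : B, X (p.1, b) (q.1, b)

/-- If a bipartite channel `N_{AB→A'B'}` admits a two-extension `M` satisfying
permutation covariance and the no-signaling marginal condition
`Tr_{B₂'} ∘ M = N ⊗ Tr_{B₂}`, then `N` is non-signaling from Bob to Alice:
`Tr_{B'} ∘ N = Tr_{B'} ∘ N ∘ R^π_B`. -/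
theorem two_extension_implies_nonsignaling
    {A A' B B' : Type*}
    [Fintype A] [DecidableEq A] [Fintype A'] [DecidableEq A']
    [Fintype B] [DecidableEq B] [Fintype B'] [DecidableEq B']
    (N : Matrix (A × B) (A × B) ℂ → Matrix (A' × B') (A' × B') ℂ)
    (M : Matrix (A × B × B) (A × B × B) ℂ → Matrix (A' × B' × B') (A' × B' × B') ℂ)
    (hN : IsChannel N) (hM : IsChannel M)
    (hcov : ∀ X, M (swapB X) = swapB (M X))
    (hmarg : ∀ X, ptrLast (M X) = N (ptrLast X)) :
    ∀ X : Matrix (A × B) (A × B) ℂ, ptrSnd (N X) = ptrSnd (N (replacerB X)) := by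
  intro X
  by_cases hB : Nonempty B
  · have hd : (Fintype.card B : ℂ) ≠ 0 := by
      exact_mod_cast Nat.cast_ne_zero.mpr (Fintype.card_ne_zero (α := B))
    set Y : Matrix (A × B × B) (A × B × B) ℂ :=
      Matrix.of (fun p q => X (p.1, p.2.1) (q.1, q.2.1) *
        (if p.2.2 = q.2.2 then ((Fintype.card B : ℂ))⁻¹ else 0)) with hY
    have h1 : ptrLast Y = X := by
      ext p q
      simp only [ptrLast, hY, Matrix.of_apply]
      simp only [mul_ite, mul_zero, Finset.sum_ite_eq', Finset.mem_univ, if_true]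
      field_simp
      rw [Finset.sum_const, Finset.card_univ, nsmul_eq_mul]
      field_simp
    have h2 : ptrLast (swapB Y) = replacerB X := by
      ext p q
      simp only [ptrLast, swapB, replacerB, hY, Matrix.of_apply]
      rw [Finset.mul_sum]
      exact Finset.sum_congr rfl fun b _ => mul_comm _ _
    have h3 : ∀ Z : Matrix (A' × B' × B') (A' × B' × B') ℂ,
        ptrSnd (ptrLast Z) = ptrSnd (ptrLast (swapB Z)) := by
      intro Z
      ext a a'
      simp only [ptrSnd, ptrLast, swapB, Matrix.of_apply]
      rw [Finset.sum_comm]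
    calc ptrSnd (N X) = ptrSnd (N (ptrLast Y)) := by rw [h1]
      _ = ptrSnd (ptrLast (M Y)) := by rw [hmarg]
      _ = ptrSnd (ptrLast (swapB (M Y))) := h3 _
      _ = ptrSnd (ptrLast (M (swapB Y))) := by rw [hcov]
      _ = ptrSnd (N (ptrLast (swapB Y))) := by rw [hmarg]
      _ = ptrSnd (N (replacerB X)) := by rw [h2]
  · have : replacerB X = X := by
      ext p q
      exact absurd ⟨p.2⟩ hB
    rw [this]

end
end

section
/- An operator on ℂ^d ⊗ ℂ^{d_E} ⊗ ℂ^d of the form Γ = Φ ⊗ K' + ((I-Φ)/(d²-1)) ⊗ L' (with Φ the maximally entangled projector on the first and third factors, and K', L' operators on ℂ^{d_E}) is positive semi-definite with partial trace over the third factor equal to the identity if and only if K' ≥ 0, L' ≥ 0, and K' + L' = d·I. -/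
/-!
Up to a reordering of the tensor factors, `Γ = Φ ⊗ K' + (1 - Φ) ⊗ (d² - 1)⁻¹ L'`, and `Φ`, `1 - Φ`
are orthogonal projections, so `Γ ≥ 0` whenever `K', L' ≥ 0`. Conversely, compressing `Γ` by the
unnormalised maximally entangled embedding `v ↦ ∑ₐ |a⟩ ⊗ v ⊗ |a⟩` gives `d K'`, while the block of `Γ`
at outer indices `(a, b)` with `a ≠ b`, where `Φ` vanishes, is `(d² - 1)⁻¹ L'`; both inherit positivity
from `Γ`. Finally the partial trace of `Γ` over the third factor is `I ⊗ (K' + L') / d`.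
-/

open Matrix
open scoped ComplexOrder

noncomputable section

/-- The projector onto the maximally entangled state,
`Φ = (1/d) ∑_{i,j} |ii⟩⟨jj|`. -/
def PhiME (d : ℕ) : Matrix (Fin d × Fin d) (Fin d × Fin d) ℂ :=
  Matrix.of fun p q => if p.1 = p.2 ∧ q.1 = q.2 then (d : ℂ)⁻¹ else 0

/-- The operator `Γ = Φ ⊗ K' + ((I-Φ)/(d²-1)) ⊗ L'` on `ℂ^d ⊗ ℂ^{d_E} ⊗ ℂ^d`,
with `Φ` on the first and third factors and `K', L'` on the middle factor. -/
def GammaKL (d dE : ℕ) (K L : Matrix (Fin dE) (Fin dE) ℂ) :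
    Matrix (Fin d × Fin dE × Fin d) (Fin d × Fin dE × Fin d) ℂ :=
  Matrix.of fun p q =>
    PhiME d (p.1, p.2.2) (q.1, q.2.2) * K p.2.1 q.2.1 +
      ((1 - PhiME d : Matrix (Fin d × Fin d) (Fin d × Fin d) ℂ) (p.1, p.2.2) (q.1, q.2.2)
          / ((d : ℂ) ^ 2 - 1)) * L p.2.1 q.2.1

open scoped Kronecker

lemma isStarProjection_PhiME {d : ℕ} (hd : d ≠ 0) : IsStarProjection (PhiME d) where
  isIdempotentElem := by
    ext ⟨i, i'⟩ ⟨j, j'⟩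
    simp only [mul_apply, PhiME, of_apply, Fintype.sum_prod_type]
    by_cases h1 : i = i' <;> by_cases h2 : j = j' <;> simp [h1, h2, Finset.sum_ite_eq, mul_comm]
    field_simp
  isSelfAdjoint := by
    ext p q
    simp only [PhiME, star_apply, of_apply]
    split_ifs <;> simp_all

lemma Matrix.PosSemidef.of_smul {n : Type*} [Fintype n] {A : Matrix n n ℂ} {c : ℂ} (hc : 0 < c)
    (h : (c • A).PosSemidef) : A.PosSemidef := by
  simpa [smul_smul, inv_mul_cancel₀ hc.ne'] using h.smul (inv_nonneg_of_nonneg hc.le)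

section GammaKL

variable {d dE : ℕ} {K L : Matrix (Fin dE) (Fin dE) ℂ}

lemma GammaKL_eq_submatrix_kronecker :
    GammaKL d dE K L =
      (PhiME d ⊗ₖ K + (1 - PhiME d) ⊗ₖ (((d : ℂ) ^ 2 - 1)⁻¹ • L)).submatrix
        (fun p => ((p.1, p.2.2), p.2.1)) (fun p => ((p.1, p.2.2), p.2.1)) := by
  ext ⟨a, m, b⟩ ⟨c, n, b'⟩
  simp only [GammaKL, of_apply, submatrix_apply, Matrix.add_apply, Matrix.sub_apply,
    kroneckerMap_apply, Matrix.smul_apply, smul_eq_mul, div_eq_mul_inv]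
  ring

lemma posSemidef_GammaKL (hd : d ≠ 0) (hK : K.PosSemidef) (hL : L.PosSemidef) :
    (GammaKL d dE K L).PosSemidef := by
  have hΦ := isStarProjection_PhiME hd
  have hc : (0 : ℂ) ≤ ((d : ℂ) ^ 2 - 1)⁻¹ := inv_nonneg_of_nonneg <|
    sub_nonneg.mpr (one_le_pow₀ (Nat.one_le_cast.mpr (Nat.one_le_iff_ne_zero.mpr hd)))
  rw [GammaKL_eq_submatrix_kronecker]
  open scoped MatrixOrder in
  exact ((hΦ.nonneg.posSemidef.kronecker hK).add
    (hΦ.one_sub_nonneg.posSemidef.kronecker (hL.smul hc))).submatrix _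

lemma sum_GammaKL_apply (hd : 2 ≤ d) (a c : Fin d) (m n : Fin dE) :
    ∑ b, GammaKL d dE K L (a, m, b) (c, n, b) =
      if a = c then (d : ℂ)⁻¹ * (K m n + L m n) else 0 := by
  have hd0 : (d : ℂ) ≠ 0 := by norm_cast; omega
  have hd1 : (d : ℂ) ^ 2 - 1 ≠ 0 := by
    rw [sub_ne_zero]; norm_cast; nlinarith
  simp only [GammaKL, PhiME, of_apply, Matrix.sub_apply, one_apply, Prod.mk.injEq]
  by_cases hac : a = c
  · subst hac
    simp only [and_self, ite_mul, zero_mul, div_eq_mul_inv, Finset.sum_add_distrib,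
      Finset.sum_ite_eq, Finset.mem_univ, if_true, ← Finset.sum_mul, Finset.sum_sub_distrib,
      Finset.sum_const, Finset.card_univ, Fintype.card_fin, nsmul_eq_mul, mul_one]
    field_simp
  · refine (Finset.sum_eq_zero fun b _ => ?_).trans (if_neg hac).symm
    have hb : ¬(a = b ∧ c = b) := fun h => hac (h.1.trans h.2.symm)
    simp [hb, hac]

lemma partialTrace_GammaKL_eq_one_iff (hd : 2 ≤ d) :
    Matrix.of (fun r s : Fin d × Fin dE => ∑ b, GammaKL d dE K L (r.1, r.2, b) (s.1, s.2, b)) = 1 ↔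
      K + L = (d : ℂ) • 1 := by
  have hd0 : (d : ℂ) ≠ 0 := by norm_cast; omega
  simp only [← Matrix.ext_iff, of_apply, sum_GammaKL_apply hd, Prod.forall, one_apply,
    Prod.mk.injEq, Matrix.add_apply, Matrix.smul_apply, smul_eq_mul]
  constructor
  · intro h m n
    have hentry := h ⟨0, by omega⟩ m ⟨0, by omega⟩ n
    split_ifs at hentry ⊢ <;> simp_all [inv_mul_eq_iff_eq_mul₀ hd0]
  · intro h a m c n
    by_cases hac : a = c <;> by_cases hmn : m = n <;> simp [h, hac, hmn, hd0]

def maxEntEmbedding (d dE : ℕ) : Matrix (Fin d × Fin dE × Fin d) (Fin dE) ℂ :=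
  of fun p m => if p.1 = p.2.2 ∧ p.2.1 = m then 1 else 0

lemma GammaKL_apply_diag (a c : Fin d) (m n : Fin dE) :
    GammaKL d dE K L (a, m, a) (c, n, c) =
      (d : ℂ)⁻¹ * K m n + ((if a = c then 1 else 0) - (d : ℂ)⁻¹) / ((d : ℂ) ^ 2 - 1) * L m n := by
  simp [GammaKL, PhiME, one_apply]

lemma conjTranspose_maxEntEmbedding_mul_GammaKL_mul :
    (maxEntEmbedding d dE)ᴴ * GammaKL d dE K L * maxEntEmbedding d dE = (d : ℂ) • K := by
  ext m n
  have hentry : ((maxEntEmbedding d dE)ᴴ * GammaKL d dE K L * maxEntEmbedding d dE) m n =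
      ∑ a, ∑ c, GammaKL d dE K L (a, m, a) (c, n, c) := by
    simpa [maxEntEmbedding, mul_apply, Fintype.sum_prod_type, ite_and,
      apply_ite (starRingEnd ℂ)] using Finset.sum_comm
  rw [hentry]
  simp only [GammaKL_apply_diag, Finset.sum_add_distrib, Finset.sum_const, Finset.card_univ,
    Fintype.card_fin, nsmul_eq_mul, ← Finset.sum_mul, ← Finset.sum_div, Finset.sum_sub_distrib,
    Finset.sum_ite_eq, Finset.mem_univ, if_true, Matrix.smul_apply, smul_eq_mul]
  rcases eq_or_ne (d : ℂ) 0 with hd | hd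
  · simp [hd]
  · field_simp
    simp

lemma submatrix_GammaKL_of_ne {a b : Fin d} (hab : a ≠ b) :
    (GammaKL d dE K L).submatrix (fun m => (a, m, b)) (fun m => (a, m, b)) =
      ((d : ℂ) ^ 2 - 1)⁻¹ • L := by
  ext m n
  simp [GammaKL, PhiME, hab, div_eq_mul_inv]

lemma Matrix.PosSemidef.of_GammaKL_left (hd : d ≠ 0) (hΓ : (GammaKL d dE K L).PosSemidef) :
    K.PosSemidef := by
  have h := hΓ.conjTranspose_mul_mul_same (maxEntEmbedding d dE)
  rw [conjTranspose_maxEntEmbedding_mul_GammaKL_mul] at h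
  exact h.of_smul (by exact_mod_cast Nat.pos_of_ne_zero hd)

lemma Matrix.PosSemidef.of_GammaKL_right (hd : 2 ≤ d) (hΓ : (GammaKL d dE K L).PosSemidef) :
    L.PosSemidef := by
  have h := hΓ.submatrix (fun m => ((⟨0, by omega⟩ : Fin d), m, (⟨1, by omega⟩ : Fin d)))
  rw [submatrix_GammaKL_of_ne (by simp [Fin.ext_iff])] at h
  exact h.of_smul <| inv_pos_of_pos <|
    sub_pos.mpr (one_lt_pow₀ (Nat.one_lt_cast.mpr hd) two_ne_zero)

end GammaKL

/-- `Γ = Φ ⊗ K' + ((I-Φ)/(d²-1)) ⊗ L'` is positive semi-definite with partial trace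
over the third factor equal to the identity iff `K' ≥ 0`, `L' ≥ 0`, and `K' + L' = d·I`. -/
theorem gamma_choi_characterization (d dE : ℕ) (hd : 2 ≤ d)
    (K L : Matrix (Fin dE) (Fin dE) ℂ) :
    ((GammaKL d dE K L).PosSemidef ∧
      Matrix.of (fun r s : Fin d × Fin dE =>
          ∑ b : Fin d, GammaKL d dE K L (r.1, r.2, b) (s.1, s.2, b))
        = (1 : Matrix (Fin d × Fin dE) (Fin d × Fin dE) ℂ))
      ↔ (K.PosSemidef ∧ L.PosSemidef ∧ K + L = (d : ℂ) • (1 : Matrix (Fin dE) (Fin dE) ℂ)) := by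
  have hd0 : d ≠ 0 := by omega
  rw [partialTrace_GammaKL_eq_one_iff hd]
  constructor
  · rintro ⟨hΓ, hKL⟩
    exact ⟨hΓ.of_GammaKL_left hd0, hΓ.of_GammaKL_right hd, hKL⟩
  · rintro ⟨hK, hL, hKL⟩
    exact ⟨posSemidef_GammaKL hd0 hK hL, hKL⟩

end
end

section
/- Under the swap of B₁ and B₂ (acting on both sides), the operators S^+, S^-, S^0, S^1 are invariant and S^2, S^3 change sign: F_{B₁B₂}(S^i) = S^i for i ∈ {+,-,0,1} and F_{B₁B₂}(S^j) = -S^j for j ∈ {2,3}, where F_{B₁B₂}(X) = V_{B₁B₂} X V_{B₁B₂}. -/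
open Matrix
open scoped ComplexOrder

noncomputable section

/-- Swap of systems `A` and `B₁` on `ℂ^d ⊗ ℂ^d ⊗ ℂ^d`. -/
def VAB1 (d : ℕ) : Matrix (Fin d × Fin d × Fin d) (Fin d × Fin d × Fin d) ℂ :=
  Matrix.of fun p q => if p.1 = q.2.1 ∧ p.2.1 = q.1 ∧ p.2.2 = q.2.2 then 1 else 0

/-- Swap of systems `A` and `B₂`. -/
def VAB2 (d : ℕ) : Matrix (Fin d × Fin d × Fin d) (Fin d × Fin d × Fin d) ℂ :=
  Matrix.of fun p q => if p.1 = q.2.2 ∧ p.2.1 = q.2.1 ∧ p.2.2 = q.1 then 1 else 0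

/-- Swap of systems `B₁` and `B₂`. -/
def VB1B2 (d : ℕ) : Matrix (Fin d × Fin d × Fin d) (Fin d × Fin d × Fin d) ℂ :=
  Matrix.of fun p q => if p.1 = q.1 ∧ p.2.1 = q.2.2 ∧ p.2.2 = q.2.1 then 1 else 0

/-- The 3-cycle permutation operator `V_{AB₁B₂} = ∑ |k⟩⟨i| ⊗ |i⟩⟨j| ⊗ |j⟩⟨k|`. -/
def VAB1B2 (d : ℕ) : Matrix (Fin d × Fin d × Fin d) (Fin d × Fin d × Fin d) ℂ :=
  Matrix.of fun p q => if p.1 = q.2.2 ∧ p.2.1 = q.1 ∧ p.2.2 = q.2.1 then 1 else 0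

/-- The 3-cycle permutation operator `V_{B₂B₁A} = ∑ |j⟩⟨i| ⊗ |k⟩⟨j| ⊗ |i⟩⟨k|`. -/
def VB2B1A (d : ℕ) : Matrix (Fin d × Fin d × Fin d) (Fin d × Fin d × Fin d) ℂ :=
  Matrix.of fun p q => if p.1 = q.2.1 ∧ p.2.1 = q.2.2 ∧ p.2.2 = q.1 then 1 else 0

/-- Partial transpose on the first (`A`) factor. -/
def ptA {d : ℕ} (X : Matrix (Fin d × Fin d × Fin d) (Fin d × Fin d × Fin d) ℂ) :
    Matrix (Fin d × Fin d × Fin d) (Fin d × Fin d × Fin d) ℂ :=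
  Matrix.of fun p q => X (q.1, p.2) (p.1, q.2)

def Splus (d : ℕ) : Matrix (Fin d × Fin d × Fin d) (Fin d × Fin d × Fin d) ℂ :=
  (2 : ℂ)⁻¹ • (1 + VB1B2 d -
    ((d : ℂ) + 1)⁻¹ • (ptA (VAB1 d) + ptA (VAB2 d) + ptA (VAB1B2 d) + ptA (VB2B1A d)))

def Sminus (d : ℕ) : Matrix (Fin d × Fin d × Fin d) (Fin d × Fin d × Fin d) ℂ :=
  (2 : ℂ)⁻¹ • (1 - VB1B2 d -
    ((d : ℂ) - 1)⁻¹ • (ptA (VAB1 d) + ptA (VAB2 d) - ptA (VAB1B2 d) - ptA (VB2B1A d)))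

def S0 (d : ℕ) : Matrix (Fin d × Fin d × Fin d) (Fin d × Fin d × Fin d) ℂ :=
  ((d : ℂ) ^ 2 - 1)⁻¹ •
    ((d : ℂ) • (ptA (VAB1 d) + ptA (VAB2 d)) - (ptA (VAB1B2 d) + ptA (VB2B1A d)))

def S1 (d : ℕ) : Matrix (Fin d × Fin d × Fin d) (Fin d × Fin d × Fin d) ℂ :=
  ((d : ℂ) ^ 2 - 1)⁻¹ •
    ((d : ℂ) • (ptA (VAB1B2 d) + ptA (VB2B1A d)) - (ptA (VAB1 d) + ptA (VAB2 d)))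

def S2 (d : ℕ) : Matrix (Fin d × Fin d × Fin d) (Fin d × Fin d × Fin d) ℂ :=
  ((Real.sqrt ((d : ℝ) ^ 2 - 1) : ℂ))⁻¹ • (ptA (VAB1 d) - ptA (VAB2 d))

def S3 (d : ℕ) : Matrix (Fin d × Fin d × Fin d) (Fin d × Fin d × Fin d) ℂ :=
  (Complex.I / (Real.sqrt ((d : ℝ) ^ 2 - 1) : ℂ)) • (ptA (VAB1B2 d) - ptA (VB2B1A d))


def sw (d : ℕ) : (Fin d × Fin d × Fin d) ≃ (Fin d × Fin d × Fin d) :=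
  (Equiv.refl (Fin d)).prodCongr (Equiv.prodComm (Fin d) (Fin d))

lemma sw_apply (d : ℕ) (p : Fin d × Fin d × Fin d) : sw d p = (p.1, p.2.2, p.2.1) := rfl
lemma sw_symm (d : ℕ) : (sw d).symm = sw d := rfl

lemma VB1B2_eq (d : ℕ) : VB1B2 d = (sw d).toPEquiv.toMatrix := by
  ext p q
  simp only [VB1B2, Matrix.of_apply, PEquiv.toMatrix_apply, Equiv.toPEquiv_apply, sw_apply,
    Option.mem_def, Option.some.injEq, Prod.ext_iff]
  refine if_congr ?_ rfl rfl
  constructor <;> rintro ⟨h1, h2, h3⟩ <;> simp_all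

lemma conj_eq (d : ℕ) (M : Matrix (Fin d × Fin d × Fin d) (Fin d × Fin d × Fin d) ℂ) :
    VB1B2 d * M * VB1B2 d = M.submatrix (sw d) (sw d) := by
  rw [VB1B2_eq, PEquiv.toMatrix_toPEquiv_mul, PEquiv.mul_toMatrix_toPEquiv, sw_symm,
    Matrix.submatrix_submatrix]
  rfl

lemma conj_one (d : ℕ) : VB1B2 d * VB1B2 d = 1 := by
  have h := conj_eq d 1
  rw [Matrix.mul_one] at h
  rw [h]; ext p q
  simp only [Matrix.submatrix_apply, Matrix.one_apply, sw_apply, Prod.ext_iff]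
  refine if_congr ?_ rfl rfl
  constructor <;> rintro ⟨h1, h2, h3⟩ <;> simp_all

lemma conj_A1 (d : ℕ) : VB1B2 d * ptA (VAB1 d) * VB1B2 d = ptA (VAB2 d) := by
  rw [conj_eq]; ext p q
  simp only [Matrix.submatrix_apply, ptA, VAB1, VAB2, Matrix.of_apply, sw_apply]
  exact if_congr (by constructor <;> rintro ⟨h1,h2,h3⟩ <;> simp_all) rfl rfl

lemma conj_A2 (d : ℕ) : VB1B2 d * ptA (VAB2 d) * VB1B2 d = ptA (VAB1 d) := by
  rw [conj_eq]; ext p q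
  simp only [Matrix.submatrix_apply, ptA, VAB1, VAB2, Matrix.of_apply, sw_apply]
  exact if_congr (by constructor <;> rintro ⟨h1,h2,h3⟩ <;> simp_all) rfl rfl

lemma conj_C (d : ℕ) : VB1B2 d * ptA (VAB1B2 d) * VB1B2 d = ptA (VB2B1A d) := by
  rw [conj_eq]; ext p q
  simp only [Matrix.submatrix_apply, ptA, VAB1B2, VB2B1A, Matrix.of_apply, sw_apply]
  exact if_congr (by constructor <;> rintro ⟨h1,h2,h3⟩ <;> simp_all) rfl rfl

lemma conj_D (d : ℕ) : VB1B2 d * ptA (VB2B1A d) * VB1B2 d = ptA (VAB1B2 d) := by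
  rw [conj_eq]; ext p q
  simp only [Matrix.submatrix_apply, ptA, VAB1B2, VB2B1A, Matrix.of_apply, sw_apply]
  exact if_congr (by constructor <;> rintro ⟨h1,h2,h3⟩ <;> simp_all) rfl rfl

/-- Under the bilateral swap of `B₁` and `B₂`, the operators `S⁺, S⁻, S⁰, S¹` are
invariant and `S², S³` change sign. -/
theorem S_ops_swap_covariance (d : ℕ) (hd : 2 ≤ d) :
    VB1B2 d * Splus d * VB1B2 d = Splus d ∧
    VB1B2 d * Sminus d * VB1B2 d = Sminus d ∧
    VB1B2 d * S0 d * VB1B2 d = S0 d ∧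
    VB1B2 d * S1 d * VB1B2 d = S1 d ∧
    VB1B2 d * S2 d * VB1B2 d = -(S2 d) ∧
    VB1B2 d * S3 d * VB1B2 d = -(S3 d) := by
  refine ⟨?_, ?_, ?_, ?_, ?_, ?_⟩ <;>
  · simp only [Splus, Sminus, S0, S1, S2, S3, Matrix.mul_smul, Matrix.smul_mul,
      Matrix.mul_add, Matrix.add_mul, Matrix.mul_sub, Matrix.sub_mul, Matrix.mul_one,
      Matrix.one_mul, conj_one, conj_A1, conj_A2, conj_C, conj_D]
    module

end
end

section
/- The partial traces over B₂ of the S operators satisfy: Tr_{B₂}[S^+] = (d(d+2)/(2(d+1)))(I_{AB₁} - Φ_{AB₁}), Tr_{B₂}[S^-] = (d(d-2)/(2(d-1)))(I_{AB₁} - Φ_{AB₁}), Tr_{B₂}[S^0] = (d/(d²-1))(I_{AB₁} - Φ_{AB₁}) + dΦ_{AB₁}, Tr_{B₂}[S^1] = Φ_{AB₁} - (1/(d²-1))(I_{AB₁} - Φ_{AB₁}), Tr_{B₂}[S^2] = √(d²-1) Φ_{AB₁} - (I_{AB₁} - Φ_{AB₁})/√(d²-1), and Tr_{B₂}[S^3]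 = 0. -/
open Matrix
open scoped ComplexOrder

noncomputable section

/-- Partial trace over the last (`B₂`) factor. -/
def ptrB2 {d : ℕ} (X : Matrix (Fin d × Fin d × Fin d) (Fin d × Fin d × Fin d) ℂ) :
    Matrix (Fin d × Fin d) (Fin d × Fin d) ℂ :=
  Matrix.of fun p q => ∑ b : Fin d, X (p.1, p.2, b) (q.1, q.2, b)

/-! Taking the partial trace over `B₂` of a partially transposed permutation operator sums a
product of Kronecker deltas over the `B₂` index: the sum either collapses to the identity or to
the unnormalised projector `d • Φ`, or counts `d` equal terms. By linearity every `S` operator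
then has a partial trace in the span of `1` and `Φ`, and it remains to compare coefficients,
which are rational functions of `d` (and of `√(d² - 1)`, using only its square). -/

section PartialTrace

variable {d : ℕ}

lemma ptrB2_add (X Y : Matrix (Fin d × Fin d × Fin d) (Fin d × Fin d × Fin d) ℂ) :
    ptrB2 (X + Y) = ptrB2 X + ptrB2 Y := by
  ext p q
  simp [ptrB2, Finset.sum_add_distrib]

lemma ptrB2_sub (X Y : Matrix (Fin d × Fin d × Fin d) (Fin d × Fin d × Fin d) ℂ) :
    ptrB2 (X - Y) = ptrB2 X - ptrB2 Y := by
  ext p q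
  simp [ptrB2, Finset.sum_sub_distrib]

lemma ptrB2_smul (c : ℂ) (X : Matrix (Fin d × Fin d × Fin d) (Fin d × Fin d × Fin d) ℂ) :
    ptrB2 (c • X) = c • ptrB2 X := by
  ext p q
  simp [ptrB2, Finset.mul_sum]

lemma ptrB2_one :
    ptrB2 (1 : Matrix (Fin d × Fin d × Fin d) (Fin d × Fin d × Fin d) ℂ) = (d : ℂ) • 1 := by
  ext p q
  simp [ptrB2, Matrix.one_apply, Prod.ext_iff, ite_and]

lemma ptrB2_VB1B2 : ptrB2 (VB1B2 d) = 1 := by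
  ext p q
  simp [ptrB2, VB1B2, Matrix.one_apply, Prod.ext_iff, ite_and]

lemma ptrB2_ptA_VAB2 : ptrB2 (ptA (VAB2 d)) = 1 := by
  ext p q
  simp only [ptrB2, ptA, VAB2, of_apply, ite_and, Finset.sum_ite_eq, Finset.mem_univ, if_true,
    Matrix.one_apply, Prod.ext_iff]
  split_ifs <;> simp_all

lemma ptrB2_ptA_VAB1 : ptrB2 (ptA (VAB1 d)) = ((d : ℂ) ^ 2) • PhiME d := by
  ext p q
  have hd : (d : ℂ) ≠ 0 := Nat.cast_ne_zero.mpr p.1.pos.ne'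
  simp only [ptrB2, ptA, VAB1, PhiME, of_apply, ite_and, Finset.sum_ite_irrel, Finset.sum_const,
    Finset.card_univ, Fintype.card_fin, nsmul_eq_mul, if_true, Matrix.smul_apply]
  split_ifs <;> simp_all [sq]

lemma ptrB2_ptA_VAB1B2 : ptrB2 (ptA (VAB1B2 d)) = (d : ℂ) • PhiME d := by
  ext p q
  have hd : (d : ℂ) ≠ 0 := Nat.cast_ne_zero.mpr p.1.pos.ne'
  simp only [ptrB2, ptA, VAB1B2, PhiME, of_apply, ite_and, Finset.sum_ite_eq, Finset.mem_univ,
    if_true, Matrix.smul_apply]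
  split_ifs <;> simp_all

lemma ptrB2_ptA_VB2B1A : ptrB2 (ptA (VB2B1A d)) = (d : ℂ) • PhiME d := by
  ext p q
  have hd : (d : ℂ) ≠ 0 := Nat.cast_ne_zero.mpr p.1.pos.ne'
  simp only [ptrB2, ptA, VB2B1A, PhiME, of_apply, ite_and, Finset.sum_ite_eq,
    Finset.sum_ite_irrel, Finset.sum_const_zero, Finset.mem_univ, if_true, Matrix.smul_apply]
  split_ifs <;> simp_all

end PartialTrace

/-- The partial traces over `B₂` of the `S` operators. -/
theorem S_ops_ptrB2 (d : ℕ) (hd : 2 ≤ d) :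
    ptrB2 (Splus d) = ((d : ℂ) * ((d : ℂ) + 2) / (2 * ((d : ℂ) + 1))) • (1 - PhiME d) ∧
    ptrB2 (Sminus d) = ((d : ℂ) * ((d : ℂ) - 2) / (2 * ((d : ℂ) - 1))) • (1 - PhiME d) ∧
    ptrB2 (S0 d) = ((d : ℂ) / ((d : ℂ) ^ 2 - 1)) • (1 - PhiME d) + (d : ℂ) • PhiME d ∧
    ptrB2 (S1 d) = PhiME d - (((d : ℂ) ^ 2 - 1))⁻¹ • (1 - PhiME d) ∧
    ptrB2 (S2 d) = ((Real.sqrt ((d : ℝ) ^ 2 - 1) : ℂ)) • PhiME d -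
      ((Real.sqrt ((d : ℝ) ^ 2 - 1) : ℂ))⁻¹ • (1 - PhiME d) ∧
    ptrB2 (S3 d) = 0 := by
  simp only [Splus, Sminus, S0, S1, S2, S3, ptrB2_smul, ptrB2_sub, ptrB2_add, ptrB2_one,
    ptrB2_VB1B2, ptrB2_ptA_VAB1, ptrB2_ptA_VAB2, ptrB2_ptA_VAB1B2, ptrB2_ptA_VB2B1A]
  have hd1 : (d : ℂ) + 1 ≠ 0 := Nat.cast_add_one_ne_zero d
  have hdm1 : (d : ℂ) - 1 ≠ 0 := sub_ne_zero.mpr (by norm_cast; omega)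
  have hpos : (0 : ℝ) < (d : ℝ) ^ 2 - 1 := by
    have : (2 : ℝ) ≤ d := by exact_mod_cast hd
    nlinarith
  set s : ℂ := (Real.sqrt ((d : ℝ) ^ 2 - 1) : ℂ)
  have hs0 : s ≠ 0 := Complex.ofReal_ne_zero.mpr (Real.sqrt_pos.mpr hpos).ne'
  have hs : s ^ 2 = (d : ℂ) ^ 2 - 1 := by
    rw [← Complex.ofReal_pow, Real.sq_sqrt hpos.le]
    push_cast
    ring
  have hd2 : (d : ℂ) ^ 2 - 1 ≠ 0 := hs ▸ pow_ne_zero 2 hs0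
  refine ⟨?_, ?_, ?_, ?_, ?_, ?_⟩ <;> match_scalars <;> field_simp
  all_goals first | ring1 | linear_combination -hs

end
end

section
/- The partial traces of the S operators over the first factor A are: Tr_A[S^+] = ((d+2)(d-1)/(d+1)) Π^S, Tr_A[S^-] = ((d-2)(d+1)/(d-1)) Π^A, Tr_A[S^0] = (2/(d+1))Π^S + (2/(d-1))Π^A, Tr_A[S^1] = (2/(d+1))Π^S - (2/(d-1))Π^A, Tr_A[S^2] = 0, and Tr_A[S^3] = 0, where Π^S = (I + V)/2 and Π^A = (I - V)/2 are the symmetric and antisymmetric projectors on B₁B₂ with V the swap operator. -/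
open Matrix
open scoped ComplexOrder

noncomputable section

/-- Partial trace over the first (`A`) factor. -/
def ptrA {d : ℕ} (X : Matrix (Fin d × Fin d × Fin d) (Fin d × Fin d × Fin d) ℂ) :
    Matrix (Fin d × Fin d) (Fin d × Fin d) ℂ :=
  Matrix.of fun p q => ∑ a : Fin d, X (a, p.1, p.2) (a, q.1, q.2)

/-- The swap operator on `B₁B₂`. -/
def Vswap (d : ℕ) : Matrix (Fin d × Fin d) (Fin d × Fin d) ℂ :=
  Matrix.of fun p q => if p.1 = q.2 ∧ p.2 = q.1 then 1 else 0

/-- The symmetric projector `Πˢ = (I + V)/2` on `B₁B₂`. -/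
def PiSym (d : ℕ) : Matrix (Fin d × Fin d) (Fin d × Fin d) ℂ :=
  (2 : ℂ)⁻¹ • (1 + Vswap d)

/-- The antisymmetric projector `Πᴬ = (I - V)/2` on `B₁B₂`. -/
def PiAnti (d : ℕ) : Matrix (Fin d × Fin d) (Fin d × Fin d) ℂ :=
  (2 : ℂ)⁻¹ • (1 - Vswap d)

section aux

variable {d : ℕ}

lemma ptrA_add (X Y : Matrix (Fin d × Fin d × Fin d) (Fin d × Fin d × Fin d) ℂ) :
    ptrA (X + Y) = ptrA X + ptrA Y := by
  ext p q
  simp [ptrA, Finset.sum_add_distrib]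

lemma ptrA_sub (X Y : Matrix (Fin d × Fin d × Fin d) (Fin d × Fin d × Fin d) ℂ) :
    ptrA (X - Y) = ptrA X - ptrA Y := by
  ext p q
  simp [ptrA, Finset.sum_sub_distrib]

lemma ptrA_smul (c : ℂ) (X : Matrix (Fin d × Fin d × Fin d) (Fin d × Fin d × Fin d) ℂ) :
    ptrA (c • X) = c • ptrA X := by
  ext p q
  simp [ptrA, Finset.mul_sum]

lemma ptrA_ptA (X : Matrix (Fin d × Fin d × Fin d) (Fin d × Fin d × Fin d) ℂ) :
    ptrA (ptA X) = ptrA X := rfl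

lemma ptrA_one : ptrA (1 : Matrix (Fin d × Fin d × Fin d) (Fin d × Fin d × Fin d) ℂ)
    = (d : ℂ) • 1 := by
  ext p q
  simp [ptrA, Matrix.one_apply, Prod.ext_iff, ite_and, apply_ite (fun x : ℂ => (d : ℂ) * x)]

lemma ptrA_VAB1 : ptrA (VAB1 d) = 1 := by
  ext p q
  simp [ptrA, VAB1, Matrix.one_apply, Prod.ext_iff, ite_and, Finset.sum_ite_eq']

lemma ptrA_VAB2 : ptrA (VAB2 d) = 1 := by
  ext p q
  simp [ptrA, VAB2, Matrix.one_apply, Prod.ext_iff, ite_and, Finset.sum_ite_eq']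

lemma ptrA_VAB1B2 : ptrA (VAB1B2 d) = Vswap d := by
  ext p q
  simp [ptrA, VAB1B2, Vswap, ite_and, Finset.sum_ite_eq']

lemma ptrA_VB2B1A : ptrA (VB2B1A d) = Vswap d := by
  ext p q
  simp [ptrA, VB2B1A, Vswap, ite_and, Finset.sum_ite_eq']

lemma ptrA_VB1B2 : ptrA (VB1B2 d) = (d : ℂ) • Vswap d := by
  ext p q
  simp only [ptrA, VB1B2, Vswap, Matrix.of_apply, ite_and]
  split_ifs <;> simp_all

end aux

/-- The partial traces over `A` of the `S` operators. -/
theorem S_ops_ptrA (d : ℕ) (hd : 2 ≤ d) :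
    ptrA (Splus d) = (((d : ℂ) + 2) * ((d : ℂ) - 1) / ((d : ℂ) + 1)) • PiSym d ∧
    ptrA (Sminus d) = (((d : ℂ) - 2) * ((d : ℂ) + 1) / ((d : ℂ) - 1)) • PiAnti d ∧
    ptrA (S0 d) = (2 / ((d : ℂ) + 1)) • PiSym d + (2 / ((d : ℂ) - 1)) • PiAnti d ∧
    ptrA (S1 d) = (2 / ((d : ℂ) + 1)) • PiSym d - (2 / ((d : ℂ) - 1)) • PiAnti d ∧
    ptrA (S2 d) = 0 ∧ ptrA (S3 d) = 0 := by
  have hd1 : ((d : ℂ) + 1) ≠ 0 := Nat.cast_add_one_ne_zero d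
  have hdne : (d : ℂ) ≠ 1 := by
    intro h
    have : (d : ℂ) = ((1 : ℕ) : ℂ) := by simpa using h
    have := Nat.cast_injective (R := ℂ) this
    omega
  have hd2 : ((d : ℂ) - 1) ≠ 0 := sub_ne_zero.mpr hdne
  have hsq : ((d : ℂ) ^ 2 - 1) ≠ 0 := by
    have : (d : ℂ) ^ 2 - 1 = ((d : ℂ) + 1) * ((d : ℂ) - 1) := by ring
    rw [this]; exact mul_ne_zero hd1 hd2
  refine ⟨?_, ?_, ?_, ?_, ?_, ?_⟩
  · rw [show (((d : ℂ) + 2) * ((d : ℂ) - 1) / ((d : ℂ) + 1))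
        = (d : ℂ) - 2 * ((d : ℂ) + 1)⁻¹ by field_simp; ring]
    simp only [Splus, ptrA_smul, ptrA_sub, ptrA_add, ptrA_ptA, ptrA_one,
      ptrA_VAB1, ptrA_VAB2, ptrA_VAB1B2, ptrA_VB2B1A, ptrA_VB1B2, PiSym]
    module
  · rw [show (((d : ℂ) - 2) * ((d : ℂ) + 1) / ((d : ℂ) - 1))
        = (d : ℂ) - 2 * ((d : ℂ) - 1)⁻¹ by field_simp; ring]
    simp only [Sminus, ptrA_smul, ptrA_sub, ptrA_add, ptrA_ptA, ptrA_one,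
      ptrA_VAB1, ptrA_VAB2, ptrA_VAB1B2, ptrA_VB2B1A, ptrA_VB1B2, PiAnti]
    module
  · rw [show (2 / ((d : ℂ) + 1)) = 2 * ((d : ℂ) - 1) * ((d : ℂ) ^ 2 - 1)⁻¹ by
        field_simp; ring,
      show (2 / ((d : ℂ) - 1)) = 2 * ((d : ℂ) + 1) * ((d : ℂ) ^ 2 - 1)⁻¹ by
        field_simp; ring]
    simp only [S0, ptrA_smul, ptrA_sub, ptrA_add, ptrA_ptA, ptrA_one,
      ptrA_VAB1, ptrA_VAB2, ptrA_VAB1B2, ptrA_VB2B1A, ptrA_VB1B2, PiSym, PiAnti]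
    module
  · rw [show (2 / ((d : ℂ) + 1)) = 2 * ((d : ℂ) - 1) * ((d : ℂ) ^ 2 - 1)⁻¹ by
        field_simp; ring,
      show (2 / ((d : ℂ) - 1)) = 2 * ((d : ℂ) + 1) * ((d : ℂ) ^ 2 - 1)⁻¹ by
        field_simp; ring]
    simp only [S1, ptrA_smul, ptrA_sub, ptrA_add, ptrA_ptA, ptrA_one,
      ptrA_VAB1, ptrA_VAB2, ptrA_VAB1B2, ptrA_VB2B1A, ptrA_VB1B2, PiSym, PiAnti]
    module
  · simp only [S2, ptrA_smul, ptrA_sub, ptrA_ptA, ptrA_VAB1, ptrA_VAB2]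
    simp
  · simp only [S3, ptrA_smul, ptrA_sub, ptrA_ptA, ptrA_VAB1B2, ptrA_VB2B1A]
    simp

end
end
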